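/- For a two-layer linear factorization constrained by the balance condition UᵀU = WWᵀ and product UW = M (rank d, inner width ≥ d), the quantity Tr[UᵀU] = Tr[WWᵀ] equals the nuclear norm of M, i.e., the sum of singular values of M; moreover ‖U‖_F² = ‖W‖_F² = ‖M‖_* and this is the minimum of max(‖U‖_F², ‖W‖_F²) over all factorizations UW = M. -/

import Mathlib

/-!
For a balanced factorization `UW = M`, `(WᵀW)² = Wᵀ(UᵀU)W = MᵀM`, so `WᵀW` is the unique positive
semidefinite square root `V̂ᵀSV̂` of `MᵀM`, whose trace is `Σ sᵢ`; the same holds for `UᵀU = WWᵀ`.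
Padding the SVD factors, `U = Û√S Eᵀ`, `W = E√S V̂` with `EᵀE = 1`, gives a balanced factorization
with inner width `k`. For an arbitrary factorization, `Σ sᵢ = Tr[(ÛᵀU)(WV̂ᵀ)]`, and Cauchy–Schwarz
gives `(Σ sᵢ)² ≤ ‖ÛᵀU‖_F² ‖WV̂ᵀ‖_F² ≤ ‖U‖_F² ‖W‖_F² ≤ max(‖U‖_F², ‖W‖_F²)²`, the middle step because
`ÛÛᵀ` and `V̂ᵀV̂` are orthogonal projections.
-/

open Matrix Finset

/-- Squared Frobenius norm. -/
def frobSq {m n : ℕ} (M : Matrix (Fin m) (Fin n) ℝ) : ℝ := ∑ i, ∑ j, (M i j) ^ 2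

namespace Matrix

variable {l m n : Type*} [Fintype l] [Fintype m] [Fintype n]

lemma PosSemidef.eq_of_mul_self_eq_mul_self {A B : Matrix n n ℝ} (hA : A.PosSemidef)
    (hB : B.PosSemidef) (h : A * A = B * B) : A = B := by
  classical
  open scoped MatrixOrder Matrix.Norms.L2Operator in
  exact (CFC.mul_self_eq_mul_self_iff A B hA.nonneg hB.nonneg).mp h

lemma posSemidef_transpose_mul_diagonal_mul [DecidableEq l] {s : l → ℝ} (hs : 0 ≤ s)
    (V : Matrix l n ℝ) : (Vᵀ * diagonal s * V).PosSemidef := by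
  simpa only [conjTranspose_eq_transpose_of_trivial] using
    (PosSemidef.diagonal hs).conjTranspose_mul_mul_same V

lemma transpose_mul_self_mul_self_of_balanced {U : Matrix m l ℝ} {W : Matrix l n ℝ}
    (hbal : Uᵀ * U = W * Wᵀ) : Wᵀ * W * (Wᵀ * W) = (U * W)ᵀ * (U * W) := by
  rw [transpose_mul]
  calc Wᵀ * W * (Wᵀ * W) = Wᵀ * (W * Wᵀ) * W := by simp only [Matrix.mul_assoc]
    _ = Wᵀ * Uᵀ * (U * W) := by rw [← hbal]; simp only [Matrix.mul_assoc]

section SVD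

variable [DecidableEq l] {Uh : Matrix m l ℝ} {s : l → ℝ} {Vh : Matrix l n ℝ}

lemma transpose_mul_diagonal_mul_self (hUh : Uhᵀ * Uh = 1) (hVh : Vh * Vhᵀ = 1) :
    Vhᵀ * diagonal s * Vh * (Vhᵀ * diagonal s * Vh) =
      (Uh * diagonal s * Vh)ᵀ * (Uh * diagonal s * Vh) := by
  simp only [transpose_mul, diagonal_transpose, Matrix.mul_assoc]
  rw [← Matrix.mul_assoc Vh Vhᵀ, hVh, Matrix.one_mul, ← Matrix.mul_assoc Uhᵀ Uh, hUh,
    Matrix.one_mul]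

lemma trace_transpose_mul_diagonal_mul (hVh : Vh * Vhᵀ = 1) :
    (Vhᵀ * diagonal s * Vh).trace = ∑ i, s i := by
  rw [Matrix.mul_assoc, trace_mul_comm, Matrix.mul_assoc, hVh, Matrix.mul_one, trace_diagonal]

lemma transpose_mul_self_eq_of_balanced (hUh : Uhᵀ * Uh = 1) (hVh : Vh * Vhᵀ = 1) (hs : 0 ≤ s)
    {k : Type*} [Fintype k] {U : Matrix m k ℝ} {W : Matrix k n ℝ} (hbal : Uᵀ * U = W * Wᵀ)
    (hUW : U * W = Uh * diagonal s * Vh) : Wᵀ * W = Vhᵀ * diagonal s * Vh := by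
  refine (posSemidef_conjTranspose_mul_self W).eq_of_mul_self_eq_mul_self
    (posSemidef_transpose_mul_diagonal_mul hs Vh) ?_
  rw [transpose_mul_diagonal_mul_self hUh hVh, ← hUW]
  exact transpose_mul_self_mul_self_of_balanced hbal

end SVD

end Matrix

section Frobenius

variable {m n d : ℕ}

lemma frobSq_eq_trace_transpose_mul (A : Matrix (Fin m) (Fin n) ℝ) :
    frobSq A = (Aᵀ * A).trace := by
  simp only [frobSq, trace, diag_apply, mul_apply, transpose_apply, sq]
  exact Finset.sum_comm

lemma frobSq_eq_trace_mul_transpose (A : Matrix (Fin m) (Fin n) ℝ) :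
    frobSq A = (A * Aᵀ).trace := by
  rw [frobSq_eq_trace_transpose_mul, trace_mul_comm]

lemma frobSq_transpose (A : Matrix (Fin m) (Fin n) ℝ) : frobSq Aᵀ = frobSq A := by
  rw [frobSq_eq_trace_transpose_mul, transpose_transpose, frobSq_eq_trace_mul_transpose]

lemma frobSq_nonneg (A : Matrix (Fin m) (Fin n) ℝ) : 0 ≤ frobSq A :=
  Finset.sum_nonneg fun _ _ => Finset.sum_nonneg fun _ _ => sq_nonneg _

lemma sq_trace_mul_le_frobSq_mul_frobSq (A : Matrix (Fin m) (Fin n) ℝ)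
    (B : Matrix (Fin n) (Fin m) ℝ) : (A * B).trace ^ 2 ≤ frobSq A * frobSq B := by
  have htrace : (A * B).trace = ∑ p : Fin m × Fin n, A p.1 p.2 * B p.2 p.1 := by
    simp only [trace, diag_apply, mul_apply, Fintype.sum_prod_type]
  have hA : frobSq A = ∑ p : Fin m × Fin n, A p.1 p.2 ^ 2 := by
    rw [frobSq, Fintype.sum_prod_type]
  have hB : frobSq B = ∑ p : Fin m × Fin n, B p.2 p.1 ^ 2 := by
    rw [frobSq, Fintype.sum_prod_type, Finset.sum_comm]
  rw [htrace, hA, hB]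
  exact Finset.sum_mul_sq_le_sq_mul_sq _ _ _

lemma frobSq_transpose_mul_le {Q : Matrix (Fin m) (Fin d) ℝ} (hQ : Qᵀ * Q = 1)
    (X : Matrix (Fin m) (Fin n) ℝ) : frobSq (Qᵀ * X) ≤ frobSq X := by
  set P := 1 - Q * Qᵀ
  have hP : Pᵀ * P = 1 - Q * Qᵀ := by
    simp only [P, transpose_sub, transpose_one, transpose_mul, transpose_transpose, sub_mul,
      mul_sub, Matrix.one_mul, Matrix.mul_one, Matrix.mul_assoc]
    rw [← Matrix.mul_assoc Qᵀ Q, hQ, Matrix.one_mul]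
    abel
  have hsplit : frobSq (Qᵀ * X) + frobSq (P * X) = frobSq X := by
    simp only [frobSq_eq_trace_transpose_mul, transpose_mul, transpose_transpose]
    rw [← trace_add, Matrix.mul_assoc Xᵀ Pᵀ, ← Matrix.mul_assoc Pᵀ, hP]
    congr 1
    simp only [Matrix.mul_sub, Matrix.sub_mul, Matrix.one_mul, Matrix.mul_assoc]
    abel
  linarith [frobSq_nonneg (P * X)]

lemma frobSq_mul_transpose_le {Q : Matrix (Fin d) (Fin n) ℝ} (hQ : Q * Qᵀ = 1)
    (X : Matrix (Fin m) (Fin n) ℝ) : frobSq (X * Qᵀ) ≤ frobSq X := by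
  rw [← frobSq_transpose, transpose_mul, ← frobSq_transpose X]
  exact frobSq_transpose_mul_le (by rwa [transpose_transpose]) Xᵀ

end Frobenius

section Factorization

variable {m n k d : ℕ} {Uh : Matrix (Fin m) (Fin d) ℝ} {s : Fin d → ℝ}
  {Vh : Matrix (Fin d) (Fin n) ℝ}

lemma balanced_trace_eq_sum (hUh : Uhᵀ * Uh = 1) (hVh : Vh * Vhᵀ = 1) (hs : 0 ≤ s)
    {U : Matrix (Fin m) (Fin k) ℝ} {W : Matrix (Fin k) (Fin n) ℝ} (hbal : Uᵀ * U = W * Wᵀ)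
    (hUW : U * W = Uh * diagonal s * Vh) :
    (Uᵀ * U).trace = ∑ i, s i ∧ (W * Wᵀ).trace = ∑ i, s i ∧
      frobSq U = ∑ i, s i ∧ frobSq W = ∑ i, s i := by
  have hW : (W * Wᵀ).trace = ∑ i, s i := by
    rw [trace_mul_comm, transpose_mul_self_eq_of_balanced hUh hVh hs hbal hUW,
      trace_transpose_mul_diagonal_mul hVh]
  refine ⟨hbal ▸ hW, hW, ?_, ?_⟩
  · rw [frobSq_eq_trace_transpose_mul, hbal, hW]
  · rw [frobSq_eq_trace_mul_transpose, hW]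

lemma sum_le_max_frobSq_of_mul_eq (hUh : Uhᵀ * Uh = 1) (hVh : Vh * Vhᵀ = 1)
    {U : Matrix (Fin m) (Fin k) ℝ} {W : Matrix (Fin k) (Fin n) ℝ}
    (hUW : U * W = Uh * diagonal s * Vh) : ∑ i, s i ≤ max (frobSq U) (frobSq W) := by
  have htrace : (Uhᵀ * U * (W * Vhᵀ)).trace = ∑ i, s i := by
    rw [Matrix.mul_assoc, ← Matrix.mul_assoc U, hUW]
    simp only [Matrix.mul_assoc]
    rw [hVh, Matrix.mul_one, ← Matrix.mul_assoc, hUh, Matrix.one_mul, trace_diagonal]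
  have hmax : 0 ≤ max (frobSq U) (frobSq W) := (frobSq_nonneg U).trans (le_max_left _ _)
  refine le_of_sq_le_sq ?_ hmax
  calc (∑ i, s i) ^ 2 = (Uhᵀ * U * (W * Vhᵀ)).trace ^ 2 := by rw [htrace]
    _ ≤ frobSq (Uhᵀ * U) * frobSq (W * Vhᵀ) := sq_trace_mul_le_frobSq_mul_frobSq _ _
    _ ≤ frobSq U * frobSq W :=
      mul_le_mul (frobSq_transpose_mul_le hUh U) (frobSq_mul_transpose_le hVh W)
        (frobSq_nonneg _) (frobSq_nonneg _)
    _ ≤ max (frobSq U) (frobSq W) ^ 2 := by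
      rw [sq]
      exact mul_le_mul (le_max_left _ _) (le_max_right _ _) (frobSq_nonneg _) hmax

lemma exists_balanced_factorization (hk : d ≤ k) (hUh : Uhᵀ * Uh = 1) (hVh : Vh * Vhᵀ = 1)
    (hs : 0 ≤ s) : ∃ (U : Matrix (Fin m) (Fin k) ℝ) (W : Matrix (Fin k) (Fin n) ℝ),
      Uᵀ * U = W * Wᵀ ∧ U * W = Uh * diagonal s * Vh := by
  set E : Matrix (Fin k) (Fin d) ℝ := (1 : Matrix (Fin k) (Fin k) ℝ).submatrix id (Fin.castLE hk)
  have hE : Eᵀ * E = 1 := by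
    rw [transpose_submatrix, transpose_one, ← submatrix_mul _ _ _ id _ Function.bijective_id,
      Matrix.one_mul, submatrix_one _ (Fin.castLE_injective hk)]
  set R : Matrix (Fin d) (Fin d) ℝ := diagonal fun i => √(s i)
  have hR : R * R = diagonal s := by
    rw [diagonal_mul_diagonal]
    exact congrArg diagonal (funext fun i => Real.mul_self_sqrt (hs i))
  refine ⟨Uh * R * Eᵀ, E * R * Vh, ?_, ?_⟩
  · simp only [transpose_mul, transpose_transpose, R, diagonal_transpose, Matrix.mul_assoc]
    rw [← Matrix.mul_assoc Uhᵀ, hUh, ← Matrix.mul_assoc Vh, hVh, Matrix.one_mul]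
  · simp only [Matrix.mul_assoc]
    rw [← Matrix.mul_assoc Eᵀ, hE, Matrix.one_mul, ← Matrix.mul_assoc R R, hR]

end Factorization

theorem stmt19_general {m n k d : ℕ} (hk : d ≤ k)
    (M : Matrix (Fin m) (Fin n) ℝ)
    (Uh : Matrix (Fin m) (Fin d) ℝ) (s : Fin d → ℝ) (Vh : Matrix (Fin d) (Fin n) ℝ)
    (hs : ∀ i, 0 < s i) (hUh : Uhᵀ * Uh = 1) (hVh : Vh * Vhᵀ = 1)
    (hSVD : M = Uh * Matrix.diagonal s * Vh) :
    (∀ (U : Matrix (Fin m) (Fin k) ℝ) (W : Matrix (Fin k) (Fin n) ℝ),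
      Uᵀ * U = W * Wᵀ → U * W = M →
        (Uᵀ * U).trace = ∑ i, s i ∧ (W * Wᵀ).trace = ∑ i, s i ∧
        frobSq U = ∑ i, s i ∧ frobSq W = ∑ i, s i) ∧
    IsLeast
      {v : ℝ | ∃ (U : Matrix (Fin m) (Fin k) ℝ) (W : Matrix (Fin k) (Fin n) ℝ),
          U * W = M ∧ v = max (frobSq U) (frobSq W)}
      (∑ i, s i) := by
  have hs_nonneg : 0 ≤ s := fun i => (hs i).le
  refine ⟨fun U W hbal hUW => balanced_trace_eq_sum hUh hVh hs_nonneg hbal (hUW.trans hSVD),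
    ?_, ?_⟩
  · obtain ⟨U, W, hbal, hUW⟩ := exists_balanced_factorization hk hUh hVh hs_nonneg
    obtain ⟨-, -, hU, hW⟩ := balanced_trace_eq_sum hUh hVh hs_nonneg hbal hUW
    exact ⟨U, W, hUW.trans hSVD.symm, by rw [hU, hW, max_self]⟩
  · rintro v ⟨U, W, hUW, rfl⟩
    exact sum_le_max_frobSq_of_mul_eq hUh hVh (hUW.trans hSVD)

/-- For balanced factorizations `UW = M` with `UᵀU = WWᵀ` (rank `d`, inner width `k ≥ d`),
`Tr[UᵀU] = Tr[WWᵀ] = ‖U‖_F² = ‖W‖_F²` equals the nuclear norm `Σᵢ sᵢ` of `M`, and this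
is the minimum of `max(‖U‖_F², ‖W‖_F²)` over all factorizations `UW = M`. -/
theorem stmt19 {m n k d : ℕ} (hk : d ≤ k)
    (M : Matrix (Fin m) (Fin n) ℝ) (hrank : M.rank = d)
    (Uh : Matrix (Fin m) (Fin d) ℝ) (s : Fin d → ℝ) (Vh : Matrix (Fin d) (Fin n) ℝ)
    (hs : ∀ i, 0 < s i) (hUh : Uhᵀ * Uh = 1) (hVh : Vh * Vhᵀ = 1)
    (hSVD : M = Uh * Matrix.diagonal s * Vh) :
    (∀ (U : Matrix (Fin m) (Fin k) ℝ) (W : Matrix (Fin k) (Fin n) ℝ),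
      Uᵀ * U = W * Wᵀ → U * W = M →
        (Uᵀ * U).trace = ∑ i, s i ∧ (W * Wᵀ).trace = ∑ i, s i ∧
        frobSq U = ∑ i, s i ∧ frobSq W = ∑ i, s i) ∧
    IsLeast
      {v : ℝ | ∃ (U : Matrix (Fin m) (Fin k) ℝ) (W : Matrix (Fin k) (Fin n) ℝ),
          U * W = M ∧ v = max (frobSq U) (frobSq W)}
      (∑ i, s i) :=
  stmt19_general hk M Uh s Vh hs hUh hVh hSVD
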